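/- The crucial part of a BGP is complete: for any BGP P, set C of completeness statements, and graph G, the entailment C, G ⊨ Compl(cruc(P, C, G)) holds; i.e., for every extension pair (G, G') valid wrt C, the evaluation of the BGP cruc(P, C, G) over G' equals its evaluation over G. -/

import Mathlib

/-- Constants (IRIs/literals) -/
abbrev Const := ℕ
/-- Variables -/
abbrev Var := ℕ

/-- A term is a constant or a variable. -/
inductive Term where
  | c : Const → Term
  | v : Var → Term
deriving DecidableEq

/-- Triple pattern -/
abbrev TP := Term × Term × Term
/-- Basic graph pattern (also used for graphs, as sets of ground triple patterns) -/
abbrev BGP := Set TP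
/-- (Partial) mapping from variables to constants -/
abbrev Mapping := Var → Option Const

def termVars : Term → Set Var
  | .c _ => ∅
  | .v x => {x}

def tpVars (t : TP) : Set Var := termVars t.1 ∪ termVars t.2.1 ∪ termVars t.2.2

def bgpVars (P : BGP) : Set Var := ⋃ t ∈ P, tpVars t

def termConsts : Term → Set Const
  | .c a => {a}
  | .v _ => ∅

def tpConsts (t : TP) : Set Const := termConsts t.1 ∪ termConsts t.2.1 ∪ termConsts t.2.2

def bgpConsts (P : BGP) : Set Const := ⋃ t ∈ P, tpConsts t

/-- A graph is a BGP all of whose triples are ground. -/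
def GroundBGP (P : BGP) : Prop := ∀ t ∈ P, tpVars t = ∅

def applyTerm (μ : Mapping) : Term → Term
  | .c a => .c a
  | .v x =>
    match μ x with
    | some a => .c a
    | none => .v x

def applyTP (μ : Mapping) (t : TP) : TP :=
  (applyTerm μ t.1, applyTerm μ t.2.1, applyTerm μ t.2.2)

def applyBGP (μ : Mapping) (P : BGP) : BGP := applyTP μ '' P

/-- Domain of a mapping -/
def mdom (μ : Mapping) : Set Var := {x | μ x ≠ none}

/-- Evaluation of a BGP over a graph: ⟦P⟧_G = {μ | dom(μ) = var(P), μP ⊆ G}. -/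
def bgpEval (P G : BGP) : Set Mapping := {μ | mdom μ = bgpVars P ∧ applyBGP μ P ⊆ G}

/-- A completeness statement Compl(P_C). -/
structure CS where
  pat : BGP

/-- The CONSTRUCT query associated to a completeness statement. -/
def constructQ (C : CS) (G : BGP) : BGP := ⋃ μ ∈ bgpEval C.pat G, applyBGP μ C.pat

/-- Transfer operator T_𝒞. -/
def transfer (𝒞 : Set CS) (G : BGP) : BGP := ⋃ C ∈ 𝒞, constructQ C G

/-- (G, G') is a valid extension pair wrt 𝒞. -/
def Valid (𝒞 : Set CS) (G G' : BGP) : Prop :=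
  G ⊆ G' ∧ GroundBGP G' ∧ transfer 𝒞 G' ⊆ G

/-- 𝒞, G ⊨ Compl(P). -/
def Entails (𝒞 : Set CS) (G : BGP) (P : BGP) : Prop :=
  ∀ G', Valid 𝒞 G G' → bgpEval P G' = bgpEval P G

def emptyMap : Mapping := fun _ => none

/-- Union of two mappings (left-biased; used on mappings with disjoint domains). -/
def munion (μ ν : Mapping) : Mapping := fun x => (μ x).orElse (fun _ => ν x)

/-- Partially mapped BGP -/
abbrev PMBGP := BGP × Mapping

/-- Evaluation of a partially mapped BGP: ⟦(P, ν)⟧_G = {ν ∪ ρ | ρ ∈ ⟦P⟧_G}. -/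
def evalPM (pm : PMBGP) (G : BGP) : Set Mapping :=
  {σ | ∃ ρ ∈ bgpEval pm.1 G, σ = munion pm.2 ρ}

def evalPMSet (S : Set PMBGP) (G : BGP) : Set Mapping := ⋃ pm ∈ S, evalPM pm G

/-- S ≡_{𝒞,G} S' : equal evaluations over every valid extension pair. -/
def EquivCG (𝒞 : Set CS) (G : BGP) (S S' : Set PMBGP) : Prop :=
  ∀ G', Valid 𝒞 G G' → evalPMSet S G' = evalPMSet S' G'

/-- The freeze mapping, sending each variable to a (fresh) constant. -/
def freezeMap (frz : Var → Const) : Mapping := fun x => some (frz x)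

/-- frz is a genuine freeze mapping: injective and its values are fresh. -/
def Fresh (frz : Var → Const) (𝒞 : Set CS) (G P : BGP) : Prop :=
  Function.Injective frz ∧
    ∀ x, frz x ∉ bgpConsts G ∪ bgpConsts P ∪ ⋃ C ∈ 𝒞, bgpConsts C.pat

/-- Crucial part: cruc(P, 𝒞, G) = P ∩ id̃⁻¹(T_𝒞(P̃ ∪ G)). -/
def cruc (P : BGP) (𝒞 : Set CS) (G : BGP) (frz : Var → Const) : BGP :=
  {t | t ∈ P ∧ applyTP (freezeMap frz) t ∈ transfer 𝒞 (applyBGP (freezeMap frz) P ∪ G)}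

/-- Equivalent partial grounding operator. -/
def epg (pm : PMBGP) (𝒞 : Set CS) (G : BGP) (frz : Var → Const) : Set PMBGP :=
  {q | ∃ μ ∈ bgpEval (cruc pm.1 𝒞 G frz) G, q = (applyBGP μ pm.1, munion pm.2 μ)}

/-- A partially mapped BGP is saturated wrt 𝒞 and G. -/
def Saturated (pm : PMBGP) (𝒞 : Set CS) (G : BGP) (frz : Var → Const) : Prop :=
  epg pm 𝒞 G frz = {pm}

/-- Partially mapped BGPs reachable from (P, ∅) by the saturation algorithm's epg steps. -/
inductive Reach (𝒞 : Set CS) (G : BGP) (frz : Var → Const) (P : BGP) : PMBGP → Prop where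
  | init : Reach 𝒞 G frz P (P, emptyMap)
  | step {pm pm' : PMBGP} : Reach 𝒞 G frz P pm → epg pm 𝒞 G frz ≠ {pm} →
      pm' ∈ epg pm 𝒞 G frz → Reach 𝒞 G frz P pm'

/-- The set Ω of mappings returned by the saturation algorithm sat(P, 𝒞, G). -/
def satSet (𝒞 : Set CS) (G : BGP) (frz : Var → Const) (P : BGP) : Set Mapping :=
  {ν | ∃ P', Reach 𝒞 G frz P (P', ν) ∧ Saturated (P', ν) 𝒞 G frz}

/-! Unfreezing with `μ ∈ ⟦cruc⟧_{G'}` (sending `frz x` to `μ x`) is a renaming of constants that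
fixes `G` and the patterns of `𝒞`, hence commutes with every construct query. It carries each
witness of `t̃ ∈ T_𝒞(P̃ ∪ G)` to a witness of `μ(t) ∈ T_𝒞(G')`: a matched triple of `G` stays in
`G ⊆ G'`, and a matched frozen triple `s̃` lies in `T_𝒞(P̃ ∪ G)`, so `s ∈ cruc` and `μ(s) ∈ G'`.
Validity of `(G, G')` then gives `μ(t) ∈ G`. -/

def mapConstTerm (f : Const → Const) : Term → Term
  | .c a => .c (f a)
  | .v x => .v x

def mapConstTP (f : Const → Const) (t : TP) : TP :=
  (mapConstTerm f t.1, mapConstTerm f t.2.1, mapConstTerm f t.2.2)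

lemma applyTerm_congr {μ μ' : Mapping} {w : Term} (h : ∀ x ∈ termVars w, μ x = μ' x) :
    applyTerm μ w = applyTerm μ' w := by
  cases w with
  | c a => rfl
  | v x => simp [applyTerm, h x (by simp [termVars])]

lemma applyTP_congr {μ μ' : Mapping} {t : TP} (h : ∀ x ∈ tpVars t, μ x = μ' x) :
    applyTP μ t = applyTP μ' t := by
  simp only [tpVars, Set.mem_union] at h
  simp only [applyTP, Prod.mk.injEq]
  exact ⟨applyTerm_congr fun x hx => h x (.inl (.inl hx)),
    applyTerm_congr fun x hx => h x (.inl (.inr hx)), applyTerm_congr fun x hx => h x (.inr hx)⟩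

section MapConst

variable (f : Const → Const)

lemma mapConstTerm_eq_self {w : Term} (hf : ∀ a ∈ termConsts w, f a = a) :
    mapConstTerm f w = w := by
  cases w <;> simp_all [mapConstTerm, termConsts]

lemma mapConstTP_eq_self {t : TP} (hf : ∀ a ∈ tpConsts t, f a = a) : mapConstTP f t = t := by
  simp only [tpConsts, Set.mem_union] at hf
  simp only [mapConstTP]
  rw [mapConstTerm_eq_self f fun a ha => hf a (.inl (.inl ha)),
    mapConstTerm_eq_self f fun a ha => hf a (.inl (.inr ha)),
    mapConstTerm_eq_self f fun a ha => hf a (.inr ha)]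

lemma mapConstTerm_applyTerm (ν : Mapping) {w : Term} (hf : ∀ a ∈ termConsts w, f a = a) :
    mapConstTerm f (applyTerm ν w) = applyTerm (fun x => (ν x).map f) w := by
  cases w with
  | c a => simp_all [applyTerm, mapConstTerm, termConsts]
  | v x => cases h : ν x <;> simp [applyTerm, mapConstTerm, h]

lemma mapConstTP_applyTP (ν : Mapping) {t : TP} (hf : ∀ a ∈ tpConsts t, f a = a) :
    mapConstTP f (applyTP ν t) = applyTP (fun x => (ν x).map f) t := by
  simp only [tpConsts, Set.mem_union] at hf
  simp only [mapConstTP, applyTP]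
  rw [mapConstTerm_applyTerm f ν fun a ha => hf a (.inl (.inl ha)),
    mapConstTerm_applyTerm f ν fun a ha => hf a (.inl (.inr ha)),
    mapConstTerm_applyTerm f ν fun a ha => hf a (.inr ha)]

end MapConst

lemma tpVars_subset_mdom {P G : BGP} {μ : Mapping} (hμ : μ ∈ bgpEval P G) {t : TP}
    (ht : t ∈ P) : tpVars t ⊆ mdom μ := by
  rw [hμ.1]
  exact Set.subset_biUnion_of_mem ht

lemma applyTP_mem_transfer {𝒞 : Set CS} {H : BGP} {C : CS} (hC : C ∈ 𝒞) {ν : Mapping}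
    (hν : ν ∈ bgpEval C.pat H) {w : TP} (hw : w ∈ C.pat) : applyTP ν w ∈ transfer 𝒞 H := by
  simp only [transfer, constructQ, Set.mem_iUnion]
  exact ⟨C, hC, ν, hν, Set.mem_image_of_mem _ hw⟩

lemma mapConstTP_mem_transfer {𝒞 : Set CS} {H H' : BGP} (f : Const → Const)
    (hf : ∀ C ∈ 𝒞, ∀ a ∈ bgpConsts C.pat, f a = a)
    (hH : ∀ v ∈ H ∩ transfer 𝒞 H, mapConstTP f v ∈ H') {u : TP} (hu : u ∈ transfer 𝒞 H) :
    mapConstTP f u ∈ transfer 𝒞 H' := by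
  simp only [transfer, constructQ, Set.mem_iUnion] at hu
  obtain ⟨C, hC, ν, hν, w, hw, rfl⟩ := hu
  have hmap : ∀ w ∈ C.pat, mapConstTP f (applyTP ν w) = applyTP (fun x => (ν x).map f) w :=
    fun w hw => mapConstTP_applyTP f ν fun a ha => hf C hC a (Set.mem_biUnion hw ha)
  have hν' : (fun x => (ν x).map f) ∈ bgpEval C.pat H' := by
    refine ⟨by simpa [mdom] using hν.1, ?_⟩
    rintro _ ⟨w, hw, rfl⟩
    rw [← hmap w hw]
    exact hH _ ⟨hν.2 (Set.mem_image_of_mem _ hw), applyTP_mem_transfer hC hν hw⟩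
  rw [hmap w hw]
  exact applyTP_mem_transfer hC hν' hw

lemma entails_of_forall_subset {𝒞 : Set CS} {G P : BGP}
    (h : ∀ G', Valid 𝒞 G G' → ∀ μ ∈ bgpEval P G', applyBGP μ P ⊆ G) : Entails 𝒞 G P := by
  intro G' hG'
  ext μ
  exact ⟨fun hμ => ⟨hμ.1, h G' hG' μ hμ⟩, fun hμ => ⟨hμ.1, hμ.2.trans hG'.1⟩⟩

noncomputable def unfreeze (frz : Var → Const) (μ : Mapping) : Const → Const :=
  Function.extend frz (fun x => (μ x).getD (frz x)) id

section Unfreeze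

variable {frz : Var → Const} {μ : Mapping}

lemma unfreeze_eq_self {a : Const} (h : ∀ x, frz x ≠ a) : unfreeze frz μ a = a :=
  Function.extend_apply' _ _ _ fun ⟨x, hx⟩ => h x hx

lemma mapConstTP_unfreeze_freeze (hinj : Function.Injective frz) {t : TP}
    (hvars : tpVars t ⊆ mdom μ) (hconsts : ∀ a ∈ tpConsts t, unfreeze frz μ a = a) :
    mapConstTP (unfreeze frz μ) (applyTP (freezeMap frz) t) = applyTP μ t := by
  rw [mapConstTP_applyTP _ _ hconsts]
  refine applyTP_congr fun x hx => ?_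
  obtain ⟨b, hb⟩ := Option.ne_none_iff_exists'.mp (hvars hx)
  simp [freezeMap, unfreeze, hinj.extend_apply, hb]

end Unfreeze

theorem stmt6_general (𝒞 : Set CS) (G : BGP) (frz : Var → Const) (P : BGP)
    (hfresh : Fresh frz 𝒞 G P) :
    Entails 𝒞 G (cruc P 𝒞 G frz) := by
  obtain ⟨hinj, hfr⟩ := hfresh
  refine entails_of_forall_subset fun G' hG' μ hμ => ?_
  obtain ⟨hGG', -, hT⟩ := hG'
  have hfix : ∀ a ∈ bgpConsts G ∪ bgpConsts P ∪ ⋃ C ∈ 𝒞, bgpConsts C.pat,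
      unfreeze frz μ a = a :=
    fun a ha => unfreeze_eq_self fun x hx => hfr x (hx ▸ ha)
  have hunfreeze : ∀ s ∈ cruc P 𝒞 G frz,
      mapConstTP (unfreeze frz μ) (applyTP (freezeMap frz) s) = applyTP μ s :=
    fun s hs => mapConstTP_unfreeze_freeze hinj (tpVars_subset_mdom hμ hs)
      fun a ha => hfix a (.inl (.inr (Set.mem_biUnion hs.1 ha)))
  rintro _ ⟨t, ht, rfl⟩
  rw [← hunfreeze t ht]
  refine hT (mapConstTP_mem_transfer _
    (fun C hC a ha => hfix a (.inr (Set.mem_biUnion hC ha))) ?_ ht.2)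
  rintro v ⟨⟨s, hsP, rfl⟩ | hvG, hvT⟩
  · rw [hunfreeze s ⟨hsP, hvT⟩]
    exact hμ.2 (Set.mem_image_of_mem _ ⟨hsP, hvT⟩)
  · rw [mapConstTP_eq_self _ fun a ha => hfix a (.inl (.inl (Set.mem_biUnion hvG ha)))]
    exact hGG' hvG

/-- The crucial part is complete: 𝒞, G ⊨ Compl(cruc(P, 𝒞, G)). -/
theorem stmt6 (𝒞 : Set CS) (G : BGP) (frz : Var → Const) (P : BGP)
    (hg : GroundBGP G) (hfresh : Fresh frz 𝒞 G P) :
    Entails 𝒞 G (cruc P 𝒞 G frz) :=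
  stmt6_general 𝒞 G frz P hfresh
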